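/- arXiv:1511.03150 — 7 statements merged into one kernel-verified Lean document; each statement's English description precedes it below -/
import Mathlib

section
/- Let π be a probability measure on Λ = {0,1}^N of the form π(n) = μ(n) v^{|n|} / Z(v), where μ(n) ≥ 0, |n| = Σ n_i, and Z(v) = Σ_n μ(n) v^{|n|}. Let a : [0,1] → ℝ be non-negative and increasing, and f(v) = Σ_n a(|n|/N) π(n). Let k* be the largest k such that some configuration n with |n| = k has μ(n) > 0. Then the Hill coefficient η_H(v) = v (d/dv) ln( f(v) / (a(k*/N) − f(v)) ) satisfies η_H(v) = N · Cov_π(a(|n|/N), |n|/N) · a(k*/N) / ( f(v) (a(k*/N) − f(v)) ). -/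
open Finset

/-- Number of occupied sites of a configuration `n ∈ {0,1}^N`. -/
def occ {N : ℕ} (n : Fin N → Bool) : ℕ :=
  (Finset.univ.filter fun i => n i = true).card

theorem stmt0 (N : ℕ) (hN : 0 < N) (μ : (Fin N → Bool) → ℝ)
    (hμ : ∀ n, 0 ≤ μ n) (a : ℝ → ℝ)
    (ha0 : ∀ x ∈ Set.Icc (0:ℝ) 1, 0 ≤ a x)
    (hamono : StrictMonoOn a (Set.Icc (0:ℝ) 1))
    (Z : ℝ → ℝ) (hZ : ∀ v, Z v = ∑ n, μ n * v ^ occ n)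
    (π : ℝ → (Fin N → Bool) → ℝ)
    (hπ : ∀ v n, π v n = μ n * v ^ occ n / Z v)
    (f : ℝ → ℝ) (hf : ∀ v, f v = ∑ n, a ((occ n : ℝ) / N) * π v n)
    (kstar : ℕ)
    (hk1 : ∃ n, occ n = kstar ∧ 0 < μ n)
    (hk2 : ∀ k, (∃ n, occ n = k ∧ 0 < μ n) → k ≤ kstar)
    (v : ℝ) (hv : 0 < v) (hZv : 0 < Z v)
    (hfv : 0 < f v) (hfv' : f v < a ((kstar : ℝ) / N)) :
    v * deriv (fun w => Real.log (f w / (a ((kstar : ℝ) / N) - f w))) v =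
      N * ((∑ n, a ((occ n : ℝ) / N) * ((occ n : ℝ) / N) * π v n) -
        (∑ n, a ((occ n : ℝ) / N) * π v n) * (∑ n, ((occ n : ℝ) / N) * π v n)) *
        a ((kstar : ℝ) / N) / (f v * (a ((kstar : ℝ) / N) - f v)) := by
  have hNne : (N : ℝ) ≠ 0 := Nat.cast_ne_zero.mpr hN.ne'
  have hZne : Z v ≠ 0 := hZv.ne'
  have hfne : f v ≠ 0 := hfv.ne'
  set A := a ((kstar : ℝ) / N) with hA
  have hAfne : A - f v ≠ 0 := sub_ne_zero.mpr (ne_of_gt hfv')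
  set g : ℝ → ℝ := fun w => ∑ n, a ((occ n : ℝ) / N) * μ n * w ^ occ n with hg
  have hfeq : ∀ w, f w = g w / Z w := by
    intro w
    rw [hf, hg]
    simp only [hπ]
    rw [Finset.sum_div]
    refine Finset.sum_congr rfl fun n _ => by ring
  -- derivatives of g and Z
  have hgd : HasDerivAt g (∑ n, a ((occ n : ℝ) / N) * μ n *
      ((occ n : ℝ) * v ^ (occ n - 1))) v := by
    apply HasDerivAt.fun_sum
    intro n _
    exact (hasDerivAt_pow (occ n) v).const_mul _
  have hZd : HasDerivAt Z (∑ n, μ n * ((occ n : ℝ) * v ^ (occ n - 1))) v := by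
    rw [show Z = fun w => ∑ n, μ n * w ^ occ n from funext hZ]
    apply HasDerivAt.fun_sum
    intro n _
    exact (hasDerivAt_pow (occ n) v).const_mul _
  set D := ∑ n, a ((occ n : ℝ) / N) * μ n * ((occ n : ℝ) * v ^ (occ n - 1)) with hD
  set E := ∑ n, μ n * ((occ n : ℝ) * v ^ (occ n - 1)) with hE
  have hfd : HasDerivAt f ((D * Z v - g v * E) / Z v ^ 2) v := by
    rw [show f = fun w => g w / Z w from funext hfeq]
    exact hgd.div hZd hZne
  set F' := (D * Z v - g v * E) / Z v ^ 2 with hF'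
  -- derivative of h = f/(A-f)
  have hhd : HasDerivAt (fun w => f w / (A - f w))
      ((F' * (A - f v) - f v * (0 - F')) / (A - f v) ^ 2) v :=
    hfd.div ((hasDerivAt_const v A).sub hfd) hAfne
  have hratne : f v / (A - f v) ≠ 0 := div_ne_zero hfne hAfne
  have hld : HasDerivAt (fun w => Real.log (f w / (A - f w)))
      (((F' * (A - f v) - f v * (0 - F')) / (A - f v) ^ 2) / (f v / (A - f v))) v :=
    hhd.log hratne
  rw [hld.deriv]
  -- key multiplication identity
  have key : ∀ c : (Fin N → Bool) → ℝ,
      v * ∑ n, c n * ((occ n : ℝ) * v ^ (occ n - 1)) = ∑ n, c n * (occ n : ℝ) * v ^ occ n := by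
    intro c
    rw [Finset.mul_sum]
    refine Finset.sum_congr rfl fun n _ => ?_
    rcases Nat.eq_zero_or_pos (occ n) with h | h
    · simp [h]
    · have h1 : occ n - 1 + 1 = occ n := Nat.sub_add_cancel h
      have h2 : v ^ occ n = v * v ^ (occ n - 1) := by
        conv_lhs => rw [← h1]
        rw [pow_succ']
      rw [h2]; ring
  set P := ∑ n, a ((occ n : ℝ) / N) * μ n * (occ n : ℝ) * v ^ occ n with hP
  set Q := ∑ n, μ n * (occ n : ℝ) * v ^ occ n with hQ
  have hvD : v * D = P := by
    rw [hD, hP, key fun n => a ((occ n : ℝ) / N) * μ n]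
  have hvE : v * E = Q := by
    rw [hE, hQ]
    have := key μ
    rw [this]
  -- rewrite the π sums
  have hsum1 : ∑ n, a ((occ n : ℝ) / N) * ((occ n : ℝ) / N) * π v n = P / (N * Z v) := by
    simp only [hπ, hP]
    rw [Finset.sum_div]
    refine Finset.sum_congr rfl fun n _ => ?_
    field_simp
  have hsum2 : ∑ n, a ((occ n : ℝ) / N) * π v n = f v := (hf v).symm
  have hsum3 : ∑ n, ((occ n : ℝ) / N) * π v n = Q / (N * Z v) := by
    simp only [hπ, hQ]
    rw [Finset.sum_div]
    refine Finset.sum_congr rfl fun n _ => ?_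
    field_simp
  have hgv : g v = f v * Z v := by rw [hfeq v]; field_simp
  have hvF' : v * F' = (P - f v * Q) / Z v := by
    rw [hF', hgv, ← mul_div_assoc, div_eq_div_iff (pow_ne_zero 2 hZne) hZne]
    linear_combination Z v ^ 2 * hvD - f v * Z v ^ 2 * hvE
  have e1 : (F' * (A - f v) - f v * (0 - F')) / (A - f v) ^ 2 / (f v / (A - f v))
      = F' * A / (f v * (A - f v)) := by
    field_simp
    ring
  rw [e1, hsum1, hsum2, hsum3]
  have e2 : (N:ℝ) * (P / (N * Z v) - f v * (Q / (N * Z v))) = (P - f v * Q) / Z v := by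
    field_simp
  rw [e2, ← hvF']
  ring
end

section
/- Let π₁ and π₂ be two probability measures on Λ = {0,1}^N each of the form π_i(n) = μ_i(n)v^{|n|}/Z_i(v), let α : (0,∞) → [0,1] be differentiable, and set π_α = α(v)π₁ + (1−α(v))π₂ and f(v) = ⟨a(|n|/N)⟩_{π_α}. Then v (d/dv) ln( f(v)/(f(∞) − f(v)) ) = [ N α(v) Cov_{π₁}(a(|n|/N), |n|/N) + N(1−α(v)) Cov_{π₂}(a(|n|/N), |n|/N) + v α'(v) ( ⟨a(|n|/N)⟩_{π₁} − ⟨a(|n|/N)⟩_{π₂} ) ] · f(∞) / ( f(v)(f(∞) − f(v)) ), where f(∞) = a(k*/N). -/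
open Finset

theorem stmt2 (N : ℕ) (hN : 0 < N)
    (μ₁ μ₂ : (Fin N → Bool) → ℝ) (hμ₁ : ∀ n, 0 ≤ μ₁ n) (hμ₂ : ∀ n, 0 ≤ μ₂ n)
    (a : ℝ → ℝ) (ha0 : ∀ x ∈ Set.Icc (0:ℝ) 1, 0 < a x)
    (hamono : ∀ x ∈ Set.Icc (0:ℝ) 1, ∀ y ∈ Set.Icc (0:ℝ) 1, x ≤ y → a x ≤ a y)
    (Z₁ Z₂ : ℝ → ℝ)
    (hZ₁ : ∀ v, Z₁ v = ∑ n, μ₁ n * v ^ occ n)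
    (hZ₂ : ∀ v, Z₂ v = ∑ n, μ₂ n * v ^ occ n)
    (π₁ π₂ : ℝ → (Fin N → Bool) → ℝ)
    (hπ₁ : ∀ v n, π₁ v n = μ₁ n * v ^ occ n / Z₁ v)
    (hπ₂ : ∀ v n, π₂ v n = μ₂ n * v ^ occ n / Z₂ v)
    (kstar : ℕ)
    (hk1 : ∃ n, occ n = kstar ∧ 0 < μ₁ n)
    (hk1' : ∃ n, occ n = kstar ∧ 0 < μ₂ n)
    (hk2 : ∀ k, (∃ n, occ n = k ∧ (0 < μ₁ n ∨ 0 < μ₂ n)) → k ≤ kstar)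
    (α α' : ℝ → ℝ) (hα01 : ∀ v, α v ∈ Set.Icc (0:ℝ) 1)
    (hα : ∀ v > (0:ℝ), HasDerivAt α (α' v) v)
    (f : ℝ → ℝ)
    (hf : ∀ v, f v = ∑ n, a ((occ n : ℝ) / N) *
      (α v * π₁ v n + (1 - α v) * π₂ v n))
    (v : ℝ) (hv : 0 < v) (hZ₁v : 0 < Z₁ v) (hZ₂v : 0 < Z₂ v)
    (hfv : 0 < f v) (hfv' : f v < a ((kstar : ℝ) / N)) :
    v * deriv (fun w => Real.log (f w / (a ((kstar : ℝ) / N) - f w))) v =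
      (N * α v * ((∑ n, a ((occ n : ℝ) / N) * ((occ n : ℝ) / N) * π₁ v n) -
          (∑ n, a ((occ n : ℝ) / N) * π₁ v n) * (∑ n, ((occ n : ℝ) / N) * π₁ v n)) +
        N * (1 - α v) * ((∑ n, a ((occ n : ℝ) / N) * ((occ n : ℝ) / N) * π₂ v n) -
          (∑ n, a ((occ n : ℝ) / N) * π₂ v n) * (∑ n, ((occ n : ℝ) / N) * π₂ v n)) +
        v * α' v * ((∑ n, a ((occ n : ℝ) / N) * π₁ v n) -
          (∑ n, a ((occ n : ℝ) / N) * π₂ v n))) *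
        a ((kstar : ℝ) / N) / (f v * (a ((kstar : ℝ) / N) - f v)) := by
  classical
  have hvne : v ≠ 0 := ne_of_gt hv
  have hNne : (N:ℝ) ≠ 0 := Nat.cast_ne_zero.mpr hN.ne'
  set A := a ((kstar : ℝ) / N) with hA
  set an : (Fin N → Bool) → ℝ := fun n => a ((occ n : ℝ) / N) with han
  -- polynomial sums at v
  set P₁ := ∑ n, an n * μ₁ n * v ^ occ n with hP₁
  set P₂ := ∑ n, an n * μ₂ n * v ^ occ n with hP₂
  set Q₁ := ∑ n, (occ n : ℝ) * μ₁ n * v ^ occ n with hQ₁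
  set Q₂ := ∑ n, (occ n : ℝ) * μ₂ n * v ^ occ n with hQ₂
  set R₁ := ∑ n, an n * (occ n : ℝ) * μ₁ n * v ^ occ n with hR₁
  set R₂ := ∑ n, an n * (occ n : ℝ) * μ₂ n * v ^ occ n with hR₂
  have hZ1ne : Z₁ v ≠ 0 := ne_of_gt hZ₁v
  have hZ2ne : Z₂ v ≠ 0 := ne_of_gt hZ₂v
  have hfvne : f v ≠ 0 := ne_of_gt hfv
  have hAfne : A - f v ≠ 0 := ne_of_gt (sub_pos.mpr hfv')
  have hpow : ∀ k : ℕ, v * ((k:ℝ) * v ^ (k - 1)) = (k:ℝ) * v ^ k := by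
    intro k
    cases k with
    | zero => simp
    | succ m =>
      have : v ^ (m + 1 - 1) * v = v ^ (m + 1) := by
        simp [pow_succ]
      calc v * (((m+1:ℕ):ℝ) * v ^ (m + 1 - 1))
          = ((m+1:ℕ):ℝ) * (v ^ (m + 1 - 1) * v) := by ring
        _ = ((m+1:ℕ):ℝ) * v ^ (m + 1) := by rw [this]
  -- f as a rational function
  have key : ∀ w, f w = α w * ((∑ n, an n * μ₁ n * w ^ occ n) / Z₁ w)
      + (1 - α w) * ((∑ n, an n * μ₂ n * w ^ occ n) / Z₂ w) := by
    intro w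
    have e₁ : α w * ((∑ n, an n * μ₁ n * w ^ occ n) / Z₁ w)
        = ∑ n, an n * (α w * (μ₁ n * w ^ occ n / Z₁ w)) := by
      rw [Finset.sum_div, Finset.mul_sum]
      exact Finset.sum_congr rfl fun n _ => by ring
    have e₂ : (1 - α w) * ((∑ n, an n * μ₂ n * w ^ occ n) / Z₂ w)
        = ∑ n, an n * ((1 - α w) * (μ₂ n * w ^ occ n / Z₂ w)) := by
      rw [Finset.sum_div, Finset.mul_sum]
      exact Finset.sum_congr rfl fun n _ => by ring
    rw [hf, e₁, e₂, ← Finset.sum_add_distrib]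
    exact Finset.sum_congr rfl fun n _ => by rw [hπ₁, hπ₂]; ring
  -- derivatives of the polynomial sums (as functions, via funext)
  have hZ₁fun : Z₁ = fun w => ∑ n, μ₁ n * w ^ occ n := funext hZ₁
  have hZ₂fun : Z₂ = fun w => ∑ n, μ₂ n * w ^ occ n := funext hZ₂
  set S₁' := ∑ n, an n * μ₁ n * ((occ n : ℝ) * v ^ (occ n - 1)) with hS₁'
  set S₂' := ∑ n, an n * μ₂ n * ((occ n : ℝ) * v ^ (occ n - 1)) with hS₂'
  set Z₁' := ∑ n, μ₁ n * ((occ n : ℝ) * v ^ (occ n - 1)) with hZ₁'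
  set Z₂' := ∑ n, μ₂ n * ((occ n : ℝ) * v ^ (occ n - 1)) with hZ₂'
  have hdS₁ : HasDerivAt (fun w => ∑ n, an n * μ₁ n * w ^ occ n) S₁' v :=
    HasDerivAt.fun_sum fun n _ => (hasDerivAt_pow (occ n) v).const_mul _
  have hdS₂ : HasDerivAt (fun w => ∑ n, an n * μ₂ n * w ^ occ n) S₂' v :=
    HasDerivAt.fun_sum fun n _ => (hasDerivAt_pow (occ n) v).const_mul _
  have hdZ₁ : HasDerivAt Z₁ Z₁' v := by
    rw [hZ₁fun]; exact HasDerivAt.fun_sum fun n _ => (hasDerivAt_pow (occ n) v).const_mul _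
  have hdZ₂ : HasDerivAt Z₂ Z₂' v := by
    rw [hZ₂fun]; exact HasDerivAt.fun_sum fun n _ => (hasDerivAt_pow (occ n) v).const_mul _
  -- relations  v * S' = R,  v * Z' = Q
  have hvS₁ : v * S₁' = R₁ := by
    rw [hS₁', hR₁, Finset.mul_sum]
    exact Finset.sum_congr rfl fun n _ => by
      rw [show v * (an n * μ₁ n * ((occ n : ℝ) * v ^ (occ n - 1)))
          = an n * μ₁ n * (v * ((occ n : ℝ) * v ^ (occ n - 1))) by ring, hpow]
      ring
  have hvS₂ : v * S₂' = R₂ := by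
    rw [hS₂', hR₂, Finset.mul_sum]
    exact Finset.sum_congr rfl fun n _ => by
      rw [show v * (an n * μ₂ n * ((occ n : ℝ) * v ^ (occ n - 1)))
          = an n * μ₂ n * (v * ((occ n : ℝ) * v ^ (occ n - 1))) by ring, hpow]
      ring
  have hvZ₁ : v * Z₁' = Q₁ := by
    rw [hZ₁', hQ₁, Finset.mul_sum]
    exact Finset.sum_congr rfl fun n _ => by
      rw [show v * (μ₁ n * ((occ n : ℝ) * v ^ (occ n - 1)))
          = μ₁ n * (v * ((occ n : ℝ) * v ^ (occ n - 1))) by ring, hpow]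
      ring
  have hvZ₂ : v * Z₂' = Q₂ := by
    rw [hZ₂', hQ₂, Finset.mul_sum]
    exact Finset.sum_congr rfl fun n _ => by
      rw [show v * (μ₂ n * ((occ n : ℝ) * v ^ (occ n - 1)))
          = μ₂ n * (v * ((occ n : ℝ) * v ^ (occ n - 1))) by ring, hpow]
      ring
  -- derivative of f at v
  have hdg₁ : HasDerivAt (fun w => (∑ n, an n * μ₁ n * w ^ occ n) / Z₁ w)
      ((S₁' * Z₁ v - P₁ * Z₁') / Z₁ v ^ 2) v := hdS₁.div hdZ₁ hZ1ne
  have hdg₂ : HasDerivAt (fun w => (∑ n, an n * μ₂ n * w ^ occ n) / Z₂ w)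
      ((S₂' * Z₂ v - P₂ * Z₂') / Z₂ v ^ 2) v := hdS₂.div hdZ₂ hZ2ne
  have hdα : HasDerivAt α (α' v) v := hα v hv
  set D := α' v * (P₁ / Z₁ v) + α v * ((S₁' * Z₁ v - P₁ * Z₁') / Z₁ v ^ 2)
      + ((0 - α' v) * (P₂ / Z₂ v) + (1 - α v) * ((S₂' * Z₂ v - P₂ * Z₂') / Z₂ v ^ 2)) with hD
  have hdF : HasDerivAt (fun w => α w * ((∑ n, an n * μ₁ n * w ^ occ n) / Z₁ w)
      + (1 - α w) * ((∑ n, an n * μ₂ n * w ^ occ n) / Z₂ w)) D v :=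
    (hdα.mul hdg₁).add (((hasDerivAt_const v (1:ℝ)).sub hdα).mul hdg₂)
  have hdf : HasDerivAt f D v := by
    have : f = fun w => α w * ((∑ n, an n * μ₁ n * w ^ occ n) / Z₁ w)
        + (1 - α w) * ((∑ n, an n * μ₂ n * w ^ occ n) / Z₂ w) := funext key
    rw [this]; exact hdF
  -- derivative of log (f / (A - f))
  have hdG : HasDerivAt (fun w => f w / (A - f w))
      ((D * (A - f v) - f v * (0 - D)) / (A - f v) ^ 2) v :=
    hdf.div ((hasDerivAt_const v A).sub hdf) hAfne
  have hGvne : f v / (A - f v) ≠ 0 := div_ne_zero hfvne hAfne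
  have hdlog : HasDerivAt (fun w => Real.log (f w / (A - f w)))
      (((D * (A - f v) - f v * (0 - D)) / (A - f v) ^ 2) / (f v / (A - f v))) v :=
    hdG.log hGvne
  rw [hdlog.deriv]
  -- rewrite the sums on the RHS
  have sA1 : (∑ n, an n * ((occ n:ℝ)/N) * π₁ v n) = R₁ / (N * Z₁ v) := by
    rw [hR₁, Finset.sum_div]
    exact Finset.sum_congr rfl fun n _ => by rw [hπ₁]; ring
  have sA2 : (∑ n, an n * ((occ n:ℝ)/N) * π₂ v n) = R₂ / (N * Z₂ v) := by
    rw [hR₂, Finset.sum_div]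
    exact Finset.sum_congr rfl fun n _ => by rw [hπ₂]; ring
  have sB1 : (∑ n, an n * π₁ v n) = P₁ / Z₁ v := by
    rw [hP₁, Finset.sum_div]
    exact Finset.sum_congr rfl fun n _ => by rw [hπ₁]; ring
  have sB2 : (∑ n, an n * π₂ v n) = P₂ / Z₂ v := by
    rw [hP₂, Finset.sum_div]
    exact Finset.sum_congr rfl fun n _ => by rw [hπ₂]; ring
  have sC1 : (∑ n, ((occ n:ℝ)/N) * π₁ v n) = Q₁ / (N * Z₁ v) := by
    rw [hQ₁, Finset.sum_div]
    exact Finset.sum_congr rfl fun n _ => by rw [hπ₁]; ring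
  have sC2 : (∑ n, ((occ n:ℝ)/N) * π₂ v n) = Q₂ / (N * Z₂ v) := by
    rw [hQ₂, Finset.sum_div]
    exact Finset.sum_congr rfl fun n _ => by rw [hπ₂]; ring
  rw [sA1, sA2, sB1, sB2, sC1, sC2]
  -- substitute derivatives:  S' = R/v,  Z' = Q/v
  have eS₁ : S₁' = R₁ / v := by field_simp [← hvS₁]; rw [← hvS₁]; ring
  have eS₂ : S₂' = R₂ / v := by field_simp [← hvS₂]; rw [← hvS₂]; ring
  have eZ₁ : Z₁' = Q₁ / v := by field_simp [← hvZ₁]; rw [← hvZ₁]; ring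
  have eZ₂ : Z₂' = Q₂ / v := by field_simp [← hvZ₂]; rw [← hvZ₂]; ring
  rw [hD, eS₁, eS₂, eZ₁, eZ₂]
  field_simp
  ring
end

section
/- In the case a(x) = x and k* = N, for π(n) = μ(n)v^{|n|}/Z(v) with μ(n) > 0 for all n, the Hill coefficient satisfies η_H(v) = N · Var_π(|n|/N) / ( p̄(1−p̄) ), where p̄ = (1/N) Σ_{i=1}^N π(n_i = 1). -/
open Finset

lemma occ_le {N : ℕ} (n : Fin N → Bool) : occ n ≤ N := by
  classical
  simpa [occ] using (Finset.card_filter_le Finset.univ fun i => n i = true)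

lemma key1 (N : ℕ) (hN : (N : ℝ) ≠ 0) (k : ℕ) (m v : ℝ) :
    v * (((k : ℝ) / N) * (m * (k * v ^ (k - 1)))) =
      (N : ℝ) * (((k : ℝ) / N) ^ 2 * (m * v ^ k)) := by
  cases k with
  | zero => simp
  | succ k =>
      have : (k + 1 : ℕ) - 1 = k := rfl
      rw [this]
      push_cast
      field_simp
      ring

lemma key2 (N : ℕ) (hN : (N : ℝ) ≠ 0) (k : ℕ) (m v : ℝ) :
    v * (m * (k * v ^ (k - 1))) = (N : ℝ) * (((k : ℝ) / N) * (m * v ^ k)) := by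
  cases k with
  | zero => simp
  | succ k =>
      have : (k + 1 : ℕ) - 1 = k := rfl
      rw [this]
      push_cast
      field_simp
      ring

theorem stmt3 (N : ℕ) (hN : 0 < N) (μ : (Fin N → Bool) → ℝ)
    (hμ : ∀ n, 0 < μ n)
    (Z : ℝ → ℝ) (hZ : ∀ v, Z v = ∑ n, μ n * v ^ occ n)
    (π : ℝ → (Fin N → Bool) → ℝ)
    (hπ : ∀ v n, π v n = μ n * v ^ occ n / Z v)
    (f : ℝ → ℝ) (hf : ∀ v, f v = ∑ n, ((occ n : ℝ) / N) * π v n)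
    (v : ℝ) (hv : 0 < v)
    (pbar : ℝ)
    (hpbar : pbar = (1 / (N : ℝ)) * ∑ i : Fin N, ∑ n, if n i = true then π v n else 0) :
    v * deriv (fun w => Real.log (f w / (1 - f w))) v =
      N * ((∑ n, ((occ n : ℝ) / N) ^ 2 * π v n) - (f v) ^ 2) /
        (pbar * (1 - pbar)) := by
  classical
  have hNR : (N : ℝ) ≠ 0 := Nat.cast_ne_zero.mpr hN.ne'
  set A : ℝ → ℝ := fun w => ∑ n, ((occ n : ℝ) / N) * (μ n * w ^ occ n) with hA
  set B : ℝ → ℝ := fun w => ∑ n, ((occ n : ℝ) / N) ^ 2 * (μ n * w ^ occ n) with hB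
  -- Z as explicit sum
  have hZfun : Z = fun w => ∑ n, μ n * w ^ occ n := funext hZ
  have hfAZ : ∀ w, f w = A w / Z w := by
    intro w
    rw [hf, hA]
    simp only [hπ, hZ, ← mul_div_assoc]
    rw [← Finset.sum_div]
  -- positivity
  have hZv : 0 < Z v := by
    rw [hZ]
    exact Finset.sum_pos (fun n _ => mul_pos (hμ n) (pow_pos hv _)) ⟨fun _ => true, mem_univ _⟩
  have hAv : 0 < A v := by
    apply Finset.sum_pos'
    · intro n _
      exact mul_nonneg (by positivity) (mul_pos (hμ n) (pow_pos hv _)).le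
    · refine ⟨fun _ => true, mem_univ _, ?_⟩
      have hocc : occ (fun _ : Fin N => true) = N := by simp [occ]
      rw [hocc]
      have : (0:ℝ) < (N:ℝ) / N := by
        rw [div_self hNR]; norm_num
      exact mul_pos this (mul_pos (hμ _) (pow_pos hv _))
  have hAZlt : A v < Z v := by
    rw [hZ]
    apply Finset.sum_lt_sum
    · intro n _
      have h1 : ((occ n : ℝ) / N) ≤ 1 := by
        rw [div_le_one (by exact_mod_cast hN)]
        exact_mod_cast occ_le n
      calc ((occ n : ℝ) / N) * (μ n * v ^ occ n) ≤ 1 * (μ n * v ^ occ n) := by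
            apply mul_le_mul_of_nonneg_right h1 (mul_pos (hμ n) (pow_pos hv _)).le
        _ = μ n * v ^ occ n := one_mul _
    · refine ⟨fun _ => false, mem_univ _, ?_⟩
      have hocc : occ (fun _ : Fin N => false) = 0 := by simp [occ]
      rw [hocc]
      simpa using mul_pos (hμ (fun _ => false)) (pow_pos hv 0)
  have hf0 : 0 < f v := by rw [hfAZ]; positivity
  have hf1 : f v < 1 := by
    rw [hfAZ, div_lt_one hZv]; exact hAZlt
  -- derivatives
  set a' : ℝ := ∑ n, ((occ n : ℝ) / N) * (μ n * ((occ n : ℝ) * v ^ (occ n - 1))) with ha'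
  set z' : ℝ := ∑ n, μ n * ((occ n : ℝ) * v ^ (occ n - 1)) with hz'
  have hdA : HasDerivAt A a' v := by
    rw [hA, ha']
    apply HasDerivAt.fun_sum
    intro n _
    exact ((hasDerivAt_pow (occ n) v).const_mul (μ n)).const_mul _
  have hdZ : HasDerivAt Z z' v := by
    rw [hZfun, hz']
    apply HasDerivAt.fun_sum
    intro n _
    exact (hasDerivAt_pow (occ n) v).const_mul (μ n)
  set fd : ℝ := (a' * Z v - A v * z') / (Z v) ^ 2 with hfd'
  have hdf : HasDerivAt f fd v := by
    have := hdA.div hdZ hZv.ne'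
    exact this.congr_of_eventuallyEq (Filter.Eventually.of_forall fun w => hfAZ w)
  -- v * a' and v * z'
  have hva : v * a' = N * B v := by
    rw [ha', hB, Finset.mul_sum, Finset.mul_sum]
    exact Finset.sum_congr rfl fun n _ => key1 N hNR (occ n) (μ n) v
  have hvz : v * z' = N * A v := by
    rw [hz', hA, Finset.mul_sum, Finset.mul_sum]
    exact Finset.sum_congr rfl fun n _ => key2 N hNR (occ n) (μ n) v
  -- derivative of the log expression
  have hlog1 : HasDerivAt (fun w => Real.log (f w)) (fd / f v) v := hdf.log hf0.ne'
  have hlog2 : HasDerivAt (fun w => Real.log (1 - f w)) ((0 - fd) / (1 - f v)) v :=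
    (((hasDerivAt_const v (1:ℝ)).sub hdf).log (by show (1:ℝ) - f v ≠ 0; linarith))
  have hsub : HasDerivAt (fun w => Real.log (f w) - Real.log (1 - f w))
      (fd / f v - (0 - fd) / (1 - f v)) v := hlog1.sub hlog2
  have hev : (fun w => Real.log (f w / (1 - f w))) =ᶠ[nhds v]
      (fun w => Real.log (f w) - Real.log (1 - f w)) := by
    have hc : ContinuousAt f v := hdf.continuousAt
    have h1 : ∀ᶠ w in nhds v, f w ≠ 0 := hc.eventually_ne hf0.ne'
    have h2 : ∀ᶠ w in nhds v, (1 : ℝ) - f w ≠ 0 := by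
      have : ContinuousAt (fun w => 1 - f w) v := continuousAt_const.sub hc
      exact this.eventually_ne (by linarith)
    filter_upwards [h1, h2] with w hw1 hw2
    exact Real.log_div hw1 hw2
  have hmain : HasDerivAt (fun w => Real.log (f w / (1 - f w)))
      (fd / f v - (0 - fd) / (1 - f v)) v :=
    hsub.congr_of_eventuallyEq hev
  rw [hmain.deriv]
  -- rewrite pbar = f v
  have hitesum : ∀ n : Fin N → Bool,
      (∑ i : Fin N, if n i = true then π v n else 0) = (occ n : ℝ) * π v n := by
    intro n
    rw [Finset.sum_ite, Finset.sum_const, Finset.sum_const, smul_zero, add_zero,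
      nsmul_eq_mul]
    rfl
  have hpb : pbar = f v := by
    rw [hpbar, hf, Finset.sum_comm, Finset.mul_sum]
    refine Finset.sum_congr rfl fun n _ => ?_
    rw [hitesum n]
    ring
  have hS2 : (∑ n, ((occ n : ℝ) / N) ^ 2 * π v n) = B v / Z v := by
    rw [hB]
    simp only [hπ, ← mul_div_assoc]
    rw [← Finset.sum_div]
  have hvfd : v * fd = N * (B v / Z v - (A v / Z v) ^ 2) := by
    have h2 : v * fd = (v * a' * Z v - A v * (v * z')) / (Z v) ^ 2 := by
      rw [hfd']; ring
    rw [h2, hva, hvz]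
    field_simp
  rw [hpb, hS2]
  have hR : (N : ℝ) * (B v / Z v - (f v) ^ 2) = v * fd := by
    rw [hfAZ v]; exact hvfd.symm
  rw [hR]
  have h1 : f v ≠ 0 := hf0.ne'
  have h2 : (1 : ℝ) - f v ≠ 0 := by linarith
  have h3 : fd / f v - (0 - fd) / (1 - f v) = fd / (f v * (1 - f v)) := by
    field_simp
    ring
  rw [h3, mul_div_assoc]
end

section
/- Consider the bivariate continuous-time Markov chain (N(t), W(t)) on {0,…,N} × {A, I} with rates q((k,A),(k+1,A)) = (N−k)v, q((k,A),(k−1,A)) = k, q((k,I),(k+1,I)) = ε(N−k)v, q((k,I),(k−1,I)) = k, q((k,I),(k,A)) = 1 and q((k,A),(k,I)) = L₁ε^k, where 0 < ε < 1, v > 0, L₁ > 0. Then the measure μ(k,A) = C(N,k)v^k / Z and μ(k,I) = L₁ C(N,k)(εv)^k / Z, with Z = (1+v)^N + L₁(1+εv)^N, satisfies the global balance (stationarity) equations of this chain. Consequently the marginal law of N(∞) is the binomial mixture π̄(k) = [ C(N,k)(v/(1+v))^k (1/(1+v))^{N−k} ] / [ 1 + ((1+εv)/(1+v))^N L₁ ]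 + [ C(N,k)(εv/(1+εv))^k (1/(1+εv))^{N−k} ] / [ 1 + ((1+v)/(1+εv))^N L₁^{−1} ]. -/
open Finset

/-- Stationarity (global balance) of the explicit measure for the bivariate
allosteric phosphorylation chain, and the resulting binomial-mixture marginal. -/
theorem stmt4 (N : ℕ) (hN : 0 < N) (ε v L₁ : ℝ)
    (hε : 0 < ε) (hε1 : ε < 1) (hv : 0 < v) (hL : 0 < L₁)
    (q : ℕ × Bool → ℕ × Bool → ℝ)
    (hq : ∀ s t : ℕ × Bool, q s t =
      (if t = (s.1 + 1, s.2) then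
        (if s.2 then ((N : ℝ) - s.1) * v else ε * ((N : ℝ) - s.1) * v) else 0) +
      (if 1 ≤ s.1 ∧ t = (s.1 - 1, s.2) then (s.1 : ℝ) else 0) +
      (if s.2 = false ∧ t = (s.1, true) then 1 else 0) +
      (if s.2 = true ∧ t = (s.1, false) then L₁ * ε ^ s.1 else 0))
    (μ : ℕ × Bool → ℝ)
    (hμ : ∀ s : ℕ × Bool, μ s =
      (if s.2 then (N.choose s.1 : ℝ) * v ^ s.1 else L₁ * (N.choose s.1 : ℝ) * (ε * v) ^ s.1) /
        ((1 + v) ^ N + L₁ * (1 + ε * v) ^ N)) :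
    (∀ s : ℕ × Bool, s.1 ≤ N →
      (∑ k ∈ Finset.range (N + 1), ∑ w : Bool,
          if (k, w) ≠ s then μ (k, w) * q (k, w) s else 0) =
        μ s * ∑ k ∈ Finset.range (N + 1), ∑ w : Bool,
          if (k, w) ≠ s then q s (k, w) else 0) ∧
    (∀ k ≤ N, μ (k, true) + μ (k, false) =
      (N.choose k : ℝ) * (v / (1 + v)) ^ k * (1 / (1 + v)) ^ (N - k) /
          (1 + ((1 + ε * v) / (1 + v)) ^ N * L₁) +
        (N.choose k : ℝ) * (ε * v / (1 + ε * v)) ^ k * (1 / (1 + ε * v)) ^ (N - k) /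
          (1 + ((1 + v) / (1 + ε * v)) ^ N * L₁⁻¹)) := by
  have hchoose : ∀ c : ℕ, c < N →
      (N.choose (c+1) : ℝ) * ((c:ℝ)+1) = (N.choose c : ℝ) * ((N:ℝ) - c) := by
    intro c h
    calc (N.choose (c+1) : ℝ) * ((c:ℝ)+1) = ((N.choose (c+1) * (c+1) : ℕ) : ℝ) := by
          push_cast; ring
      _ = ((N.choose c * (N - c) : ℕ) : ℝ) := by rw [Nat.choose_succ_right_eq]
      _ = (N.choose c : ℝ) * ((N:ℝ) - c) := by push_cast [h.le]; ring
  have db : ∀ a c : ℕ, a ≤ N → c ≤ N → ∀ b d : Bool,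
      μ (c, d) * q (c, d) (a, b) = μ (a, b) * q (a, b) (c, d) := by
    intro a c ha hc b d
    rw [hq, hq, hμ (c, d), hμ (a, b)]
    cases b <;> cases d <;>
      simp only [Prod.mk.injEq, Bool.false_eq_true, Bool.true_eq_false, and_true, and_false,
        if_false, and_self, true_and, false_and, if_true, not_false_eq_true, if_neg,
        ite_false, ite_true] <;>
      split_ifs <;>
      first
        | ring1
        | omega
        | (obtain rfl : a = c + 1 := by omega
           push_cast
           first
             | linear_combination (v^(c+1)/((1+v)^N + L₁*(1+ε*v)^N)) * hchoose c (by omega)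
             | linear_combination (-(v^(c+1))/((1+v)^N + L₁*(1+ε*v)^N)) * hchoose c (by omega)
             | linear_combination (L₁*ε^(c+1)*v^(c+1)/((1+v)^N + L₁*(1+ε*v)^N)) * hchoose c (by omega)
             | linear_combination (-(L₁*ε^(c+1)*v^(c+1))/((1+v)^N + L₁*(1+ε*v)^N)) * hchoose c (by omega))
        | (obtain rfl : c = a + 1 := by omega
           push_cast
           first
             | linear_combination (v^(a+1)/((1+v)^N + L₁*(1+ε*v)^N)) * hchoose a (by omega)
             | linear_combination (-(v^(a+1))/((1+v)^N + L₁*(1+ε*v)^N)) * hchoose a (by omega)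
             | linear_combination (L₁*ε^(a+1)*v^(a+1)/((1+v)^N + L₁*(1+ε*v)^N)) * hchoose a (by omega)
             | linear_combination (-(L₁*ε^(a+1)*v^(a+1))/((1+v)^N + L₁*(1+ε*v)^N)) * hchoose a (by omega))
        | (obtain rfl : a = c := by omega
           push_cast
           ring1)
  refine ⟨?_, ?_⟩
  · rintro ⟨a, b⟩ ha
    rw [Finset.mul_sum]
    refine Finset.sum_congr rfl fun k hk => ?_
    rw [Finset.mul_sum]
    refine Finset.sum_congr rfl fun w _ => ?_
    have hk' : k ≤ N := Nat.lt_succ_iff.mp (Finset.mem_range.mp hk)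
    by_cases h : (k, w) = (a, b)
    · simp [h]
    · rw [if_pos h, if_pos h]
      exact db a k ha hk' b w
  · intro k hk
    rw [hμ (k, true), hμ (k, false)]
    norm_num
    have h1 : (0:ℝ) < 1 + v := by linarith
    have h2 : (0:ℝ) < 1 + ε * v := by positivity
    have e1 : (1+v)^N = (1+v)^k * (1+v)^(N-k) := by
      rw [← pow_add]; congr 1; omega
    have e2 : (1+ε*v)^N = (1+ε*v)^k * (1+ε*v)^(N-k) := by
      rw [← pow_add]; congr 1; omega
    have d1 : (0:ℝ) < 1 + ((1 + ε * v) / (1 + v)) ^ N * L₁ := by positivity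
    have d2 : (0:ℝ) < 1 + ((1 + v) / (1 + ε * v)) ^ N * L₁⁻¹ := by positivity
    have hZ : (0:ℝ) < (1 + v) ^ N + L₁ * (1 + ε * v) ^ N := by positivity
    rw [← add_div, div_add_div _ _ (ne_of_gt d1) (ne_of_gt d2),
      div_eq_div_iff (ne_of_gt hZ) (by positivity)]
    simp only [div_pow, one_pow]
    field_simp
    rw [e1, e2]
    ring
end

section
/- Let 0 < ε < 1 and define f_N(v) = α_N(v)·εv/(1+εv) + (1−α_N(v))·v/(1+v) with α_N(v) = 1/(1 + (√ε(1+v)/(1+εv))^N). Fix q with 1/2 ≤ q ≤ 1/(1+√ε), and for each N let v_q^{(N)} be a solution of f_N(v_q^{(N)}) = q. Then v_q^{(N)} → v_c = 1/√ε as N → ∞. -/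
open Filter

set_option maxHeartbeats 1000000 in
theorem stmt7 (ε : ℝ) (hε : 0 < ε) (hε1 : ε < 1)
    (q : ℝ) (hq : 1 / 2 ≤ q) (hq' : q ≤ 1 / (1 + Real.sqrt ε))
    (α : ℕ → ℝ → ℝ)
    (hα : ∀ N v, α N v = 1 / (1 + (Real.sqrt ε * (1 + v) / (1 + ε * v)) ^ N))
    (f : ℕ → ℝ → ℝ)
    (hf : ∀ N v, f N v =
      α N v * (ε * v / (1 + ε * v)) + (1 - α N v) * (v / (1 + v)))
    (vq : ℕ → ℝ) (hvq : ∀ N, 0 < vq N)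
    (hroot : ∀ N, f N (vq N) = q) :
    Tendsto vq atTop (nhds (1 / Real.sqrt ε)) := by
  have hs0 : 0 < Real.sqrt ε := Real.sqrt_pos.mpr hε
  set s := Real.sqrt ε with hsdef
  have hss : s * s = ε := Real.mul_self_sqrt hε.le
  have hs1 : s < 1 := by nlinarith
  set vc : ℝ := 1 / s with hvcdef
  have hvc0 : 0 < vc := by positivity
  -- monotonicity of g v = s(1+v)/(1+εv)
  have hgmono : ∀ a b : ℝ, 0 ≤ a → a ≤ b →
      s * (1 + a) / (1 + ε * a) ≤ s * (1 + b) / (1 + ε * b) := by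
    intro a b ha hab
    have hda : 0 < 1 + ε * a := by nlinarith [mul_nonneg hε.le ha]
    have hdb : 0 < 1 + ε * b := by nlinarith [mul_nonneg hε.le (ha.trans hab)]
    rw [div_le_div_iff₀ hda hdb]
    nlinarith [mul_nonneg hs0.le
      (mul_nonneg (sub_nonneg.mpr hab) (sub_nonneg.mpr hε1.le))]
  have hgsmono : ∀ a b : ℝ, 0 ≤ a → a < b →
      s * (1 + a) / (1 + ε * a) < s * (1 + b) / (1 + ε * b) := by
    intro a b ha hab
    have hda : 0 < 1 + ε * a := by nlinarith [mul_nonneg hε.le ha]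
    have hdb : 0 < 1 + ε * b := by nlinarith [mul_nonneg hε.le (ha.trans hab.le)]
    rw [div_lt_div_iff₀ hda hdb]
    nlinarith [mul_pos hs0 (mul_pos (sub_pos.mpr hab) (sub_pos.mpr hε1))]
  have hgvc : s * (1 + vc) / (1 + ε * vc) = 1 := by
    rw [hvcdef]
    rw [div_eq_one_iff_eq (by positivity)]
    field_simp
    nlinarith
  -- monotonicity of h1 v = εv/(1+εv)
  have h1mono : ∀ a b : ℝ, 0 ≤ a → a ≤ b →
      ε * a / (1 + ε * a) ≤ ε * b / (1 + ε * b) := by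
    intro a b ha hab
    have hda : 0 < 1 + ε * a := by nlinarith [mul_nonneg hε.le ha]
    have hdb : 0 < 1 + ε * b := by nlinarith [mul_nonneg hε.le (ha.trans hab)]
    rw [div_le_div_iff₀ hda hdb]
    nlinarith [mul_le_mul_of_nonneg_left hab hε.le]
  have h1vc : ε * vc / (1 + ε * vc) = s / (1 + s) := by
    rw [hvcdef]
    rw [div_eq_div_iff (by positivity) (by positivity)]
    field_simp
    nlinarith
  -- monotonicity of h2 v = v/(1+v)
  have h2mono : ∀ a b : ℝ, 0 ≤ a → a ≤ b → a / (1 + a) ≤ b / (1 + b) := by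
    intro a b ha hab
    have hda : 0 < 1 + a := by nlinarith
    have hdb : 0 < 1 + b := by nlinarith
    rw [div_le_div_iff₀ hda hdb]
    nlinarith
  have h2smono : ∀ a b : ℝ, 0 ≤ a → a < b → a / (1 + a) < b / (1 + b) := by
    intro a b ha hab
    have hda : 0 < 1 + a := by nlinarith
    have hdb : 0 < 1 + b := by nlinarith
    rw [div_lt_div_iff₀ hda hdb]
    nlinarith
  have h2vc : vc / (1 + vc) = 1 / (1 + s) := by
    rw [hvcdef]
    rw [div_eq_div_iff (by positivity) (by positivity)]
    field_simp
    ring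
  rw [Metric.tendsto_nhds]
  intro δ hδ
  set δ₀ : ℝ := min δ (vc / 2) with hδ₀def
  have hδ₀0 : 0 < δ₀ := lt_min hδ (by positivity)
  have hδ₀δ : δ₀ ≤ δ := min_le_left _ _
  have hδ₀vc : δ₀ ≤ vc / 2 := min_le_right _ _
  have hlo : 0 < vc - δ₀ := by linarith
  set r : ℝ := s * (1 + (vc - δ₀)) / (1 + ε * (vc - δ₀)) with hrdef
  set R : ℝ := s * (1 + (vc + δ₀)) / (1 + ε * (vc + δ₀)) with hRdef
  have hdr : 0 < 1 + ε * (vc - δ₀) := by nlinarith [mul_pos hε hlo]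
  have hr0 : 0 ≤ r := by
    rw [hrdef]
    exact div_nonneg (mul_nonneg hs0.le (by linarith)) hdr.le
  have hr1 : r < 1 := by
    calc r < s * (1 + vc) / (1 + ε * vc) := hgsmono _ _ hlo.le (by linarith)
    _ = 1 := hgvc
  have hR1 : 1 < R := by
    calc (1:ℝ) = s * (1 + vc) / (1 + ε * vc) := hgvc.symm
    _ < R := hgsmono _ _ hvc0.le (by linarith)
  have hR0 : 0 < R := by linarith
  set H : ℝ := (vc + δ₀) / (1 + (vc + δ₀)) with hHdef
  have hH1 : H ≤ 1 := by
    rw [hHdef, div_le_one (by linarith)]; linarith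
  have hHq : q < H := by
    calc q ≤ 1 / (1 + s) := hq'
    _ = vc / (1 + vc) := h2vc.symm
    _ < H := h2smono _ _ hvc0.le (by linarith)
  have hc1 : s / (1 + s) < 1 / 2 := by
    rw [div_lt_div_iff₀ (by linarith) (by norm_num)]; linarith
  have hL1 : 0 ≤ 1 / R := by positivity
  have hL2 : 1 / R < 1 := by
    rw [div_lt_one hR0]; exact hR1
  have e1 : ∀ᶠ N in atTop, r ^ N < q - s / (1 + s) :=
    (tendsto_pow_atTop_nhds_zero_of_lt_one hr0 hr1).eventually
      (eventually_lt_nhds (by linarith))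
  have e2 : ∀ᶠ N in atTop, (1 / R) ^ N < H - q :=
    (tendsto_pow_atTop_nhds_zero_of_lt_one hL1 hL2).eventually
      (eventually_lt_nhds (by linarith))
  filter_upwards [e1, e2] with N h1N h2N
  rw [Real.dist_eq]
  refine lt_of_lt_of_le ?_ hδ₀δ
  rw [abs_lt]
  set v : ℝ := vq N with hvdef
  have hv : 0 < v := hvq N
  have hdv : 0 < 1 + ε * v := by nlinarith [mul_pos hε hv]
  have hgv0 : 0 ≤ s * (1 + v) / (1 + ε * v) := by
    exact div_nonneg (mul_nonneg hs0.le (by linarith)) hdv.le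
  have hfeq : α N v * (ε * v / (1 + ε * v)) + (1 - α N v) * (v / (1 + v)) = q := by
    rw [← hf]; exact hroot N
  set x : ℝ := (s * (1 + v) / (1 + ε * v)) ^ N with hxdef
  have hx0 : 0 ≤ x := pow_nonneg hgv0 N
  have hAdef : α N v = 1 / (1 + x) := hα N v
  set A : ℝ := α N v with hA
  have hA0 : 0 < A := by rw [hAdef]; positivity
  have hA1 : A ≤ 1 := by
    rw [hAdef, div_le_one (by linarith)]; linarith
  have h1v0 : 0 ≤ ε * v / (1 + ε * v) := by positivity
  have h2v1 : v / (1 + v) ≤ 1 := by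
    rw [div_le_one (by linarith)]; linarith
  constructor
  · -- lower bound: vc - δ₀ < v
    by_contra hcon
    push_neg at hcon
    have hvle : v ≤ vc - δ₀ := by linarith
    have hgvr : s * (1 + v) / (1 + ε * v) ≤ r := hgmono _ _ hv.le hvle
    have hxr : x ≤ r ^ N := pow_le_pow_left₀ hgv0 hgvr N
    have h1vb : ε * v / (1 + ε * v) ≤ s / (1 + s) := by
      calc ε * v / (1 + ε * v) ≤ ε * vc / (1 + ε * vc) :=
        h1mono _ _ hv.le (by linarith)
      _ = s / (1 + s) := h1vc
    have hAx : 1 - A ≤ x := by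
      have hlex : 1 - x ≤ 1 / (1 + x) := by
        rw [le_div_iff₀ (by linarith)]; linarith only [sq_nonneg x]
      rw [hAdef]; linarith
    have t1 : A * (ε * v / (1 + ε * v)) ≤ ε * v / (1 + ε * v) :=
      mul_le_of_le_one_left h1v0 hA1
    have t2 : (1 - A) * (v / (1 + v)) ≤ 1 - A :=
      mul_le_of_le_one_right (by linarith) h2v1
    linarith only [hfeq, t1, t2, hAx, hxr, h1vb, h1N, hq]
  · -- upper bound: v < vc + δ₀
    by_contra hcon
    push_neg at hcon
    have hvge : vc + δ₀ ≤ v := by linarith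
    have hgvR : R ≤ s * (1 + v) / (1 + ε * v) := hgmono _ _ (by linarith) hvge
    have hxR : R ^ N ≤ x := pow_le_pow_left₀ hR0.le hgvR N
    have hRN : 0 < R ^ N := pow_pos hR0 N
    have hAle : A ≤ (1 / R) ^ N := by
      have h1 : A ≤ 1 / R ^ N := by
        rw [hAdef]
        exact one_div_le_one_div_of_le hRN (by linarith)
      calc A ≤ 1 / R ^ N := h1
      _ = (1 / R) ^ N := by rw [one_div, one_div, inv_pow]
    have hH2 : H ≤ v / (1 + v) := h2mono _ _ (by linarith) hvge
    have hH0 : 0 ≤ H := by positivity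
    have t1 : 0 ≤ A * (ε * v / (1 + ε * v)) := mul_nonneg hA0.le h1v0
    have t2 : (1 - A) * H ≤ (1 - A) * (v / (1 + v)) :=
      mul_le_mul_of_nonneg_left hH2 (by linarith)
    have t3 : A * H ≤ A := by
      have := mul_le_mul_of_nonneg_left hH1 hA0.le
      linarith [this]
    have expand : (1 - A) * H = H - A * H := by ring
    linarith only [hfeq, t1, t2, t3, expand, hAle, h2N, hHq]
end

section
/- Let 0 < ε < 1, v > 0, and J(x) = x ln x + (1−x) ln(1−x) − x ln v − ln ε · ( x·1_{x ≤ 1/2} + (1/2)·1_{x > 1/2} ) on [0,1]. The critical points of J in (0,1) are among x₁ = εv/(1+εv) (if x₁ < 1/2) and x₂ = v/(1+v) (if x₂ > 1/2). Moreover J(x₁) = J(x₂) with both critical points present if and only if v = v_c = 1/√ε; in that case J attains its global minimum at exactly the two points x₁ and x₂. -/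
open Real in
private lemma stmt14_deriv_helper (c : ℝ) {x : ℝ} (hx0 : 0 < x) (hx1 : x < 1) :
    HasDerivAt (fun y => y * log y + (1 - y) * log (1 - y) - y * c)
      (log x - log (1 - x) - c) x := by
  have h1x : (0:ℝ) < 1 - x := by linarith
  have h1 : HasDerivAt (fun y : ℝ => y * log y) (log x + 1) x :=
    Real.hasDerivAt_mul_log hx0.ne'
  have h2 : HasDerivAt (fun y : ℝ => (1 - y) * log (1 - y)) (-(log (1 - x) + 1)) x := by
    have hin : HasDerivAt (fun y : ℝ => 1 - y) (-1) x := by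
      simpa using (hasDerivAt_id' x).const_sub (1:ℝ)
    have : HasDerivAt ((fun y : ℝ => y * log y) ∘ fun y => 1 - y) ((log (1 - x) + 1) * -1) x :=
      (Real.hasDerivAt_mul_log h1x.ne').comp x hin
    exact this.congr_deriv (by ring)
  have h3 : HasDerivAt (fun y : ℝ => y * c) c x := by
    simpa using (hasDerivAt_id x).mul_const c
  have := (h1.add h2).sub h3
  exact this.congr_deriv (by ring)

open Real in
private lemma stmt14_val_helper {a : ℝ} (ha : 0 < a) :
    (a/(1+a)) * log (a/(1+a)) + (1 - a/(1+a)) * log (1 - a/(1+a))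
      - (a/(1+a)) * log a = -log (1+a) := by
  have h1a : (0:ℝ) < 1 + a := by linarith
  have h1 : (1:ℝ) - a/(1+a) = 1/(1+a) := by field_simp; ring
  rw [h1, log_div ha.ne' h1a.ne', log_div one_ne_zero h1a.ne', log_one]
  field_simp
  ring

open Real in
private lemma stmt14_cont_helper (c : ℝ) :
    Continuous (fun y : ℝ => y * log y + (1 - y) * log (1 - y) - y * c) := by
  have h2 : Continuous (fun y : ℝ => (1 - y) * log (1 - y)) :=
    Real.continuous_mul_log.comp (continuous_const.sub continuous_id)
  exact (Real.continuous_mul_log.add h2).sub (continuous_id.mul continuous_const)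

open Real in
private lemma stmt14_anti_helper {t lo hi : ℝ} (ht : 0 < t)
    (h : ∀ x ∈ Set.Ioo lo hi, 0 < x ∧ x < 1 ∧ x < t * (1 - x)) :
    StrictAntiOn (fun y : ℝ => y * log y + (1 - y) * log (1 - y) - y * log t)
      (Set.Icc lo hi) := by
  apply strictAntiOn_of_deriv_neg (convex_Icc _ _) (stmt14_cont_helper (log t)).continuousOn
  intro x hx
  rw [interior_Icc] at hx
  obtain ⟨hx0, hx1, hxt⟩ := h x hx
  have h1x : (0:ℝ) < 1 - x := by linarith
  rw [(stmt14_deriv_helper (log t) hx0 hx1).deriv]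
  have := Real.log_lt_log hx0 hxt
  rw [Real.log_mul ht.ne' h1x.ne'] at this
  linarith

open Real in
private lemma stmt14_mono_helper {t lo hi : ℝ} (ht : 0 < t)
    (h : ∀ x ∈ Set.Ioo lo hi, 0 < x ∧ x < 1 ∧ t * (1 - x) < x) :
    StrictMonoOn (fun y : ℝ => y * log y + (1 - y) * log (1 - y) - y * log t)
      (Set.Icc lo hi) := by
  apply strictMonoOn_of_deriv_pos (convex_Icc _ _) (stmt14_cont_helper (log t)).continuousOn
  intro x hx
  rw [interior_Icc] at hx
  obtain ⟨hx0, hx1, hxt⟩ := h x hx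
  have h1x : (0:ℝ) < 1 - x := by linarith
  rw [(stmt14_deriv_helper (log t) hx0 hx1).deriv]
  have := Real.log_lt_log (by positivity) hxt
  rw [Real.log_mul ht.ne' h1x.ne'] at this
  linarith

set_option maxHeartbeats 1200000 in
open Real in
theorem stmt14 (ε v : ℝ) (hε : 0 < ε) (hε1 : ε < 1) (hv : 0 < v)
    (J : ℝ → ℝ)
    (hJ : ∀ x, J x = x * Real.log x + (1 - x) * Real.log (1 - x) -
      x * Real.log v - Real.log ε * (if x ≤ 1 / 2 then x else 1 / 2)) :
    (∀ x ∈ Set.Ioo (0:ℝ) 1, x ≠ 1 / 2 → HasDerivAt J 0 x →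
      x = ε * v / (1 + ε * v) ∨ x = v / (1 + v)) ∧
    ((ε * v / (1 + ε * v) < 1 / 2 ∧ 1 / 2 < v / (1 + v) ∧
        J (ε * v / (1 + ε * v)) = J (v / (1 + v))) ↔ v = 1 / Real.sqrt ε) ∧
    (v = 1 / Real.sqrt ε →
      (∀ x ∈ Set.Icc (0:ℝ) 1, J (ε * v / (1 + ε * v)) ≤ J x) ∧
      (∀ x ∈ Set.Icc (0:ℝ) 1, J x = J (ε * v / (1 + ε * v)) →
        x = ε * v / (1 + ε * v) ∨ x = v / (1 + v))) := by
  refine ⟨?_, ?_, ?_⟩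
  · -- Part 1
    rintro x ⟨hx0, hx1⟩ hxh hder
    have h1x : (0:ℝ) < 1 - x := by linarith
    rcases lt_or_gt_of_ne hxh with hlt | hgt
    · -- x < 1/2 branch
      left
      have hev : (fun y : ℝ => y * log y + (1 - y) * log (1 - y) - y * (log v + log ε))
          =ᶠ[nhds x] J := by
        filter_upwards [Iio_mem_nhds hlt] with y hy
        rw [hJ y, if_pos (le_of_lt hy)]
        ring
      have hd0 : HasDerivAt (fun y : ℝ => y * log y + (1 - y) * log (1 - y)
          - y * (log v + log ε)) 0 x := hder.congr_of_eventuallyEq hev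
      have hD := stmt14_deriv_helper (log v + log ε) hx0 hx1
      have heq : log x - log (1 - x) - (log v + log ε) = 0 := hD.unique hd0
      have hεv : (0:ℝ) < ε * v := mul_pos hε hv
      have hlogx : log x = log (ε * v * (1 - x)) := by
        rw [Real.log_mul hεv.ne' h1x.ne', Real.log_mul hε.ne' hv.ne']
        linarith
      have hxx : x = ε * v * (1 - x) := by
        calc x = Real.exp (Real.log x) := (Real.exp_log hx0).symm
          _ = ε * v * (1 - x) := by rw [hlogx, Real.exp_log (by positivity)]
      rw [eq_div_iff (by nlinarith : (1:ℝ) + ε * v ≠ 0)]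
      linear_combination hxx
    · -- x > 1/2 branch
      right
      have hev : (fun y : ℝ => y * log y + (1 - y) * log (1 - y) - y * log v - log ε * (1/2))
          =ᶠ[nhds x] J := by
        filter_upwards [Ioi_mem_nhds hgt] with y hy
        rw [hJ y, if_neg (not_le.mpr hy)]
      have hd0 : HasDerivAt (fun y : ℝ => y * log y + (1 - y) * log (1 - y)
          - y * log v - log ε * (1/2)) 0 x := hder.congr_of_eventuallyEq hev
      have hD := (stmt14_deriv_helper (log v) hx0 hx1).sub_const (log ε * (1/2))
      have heq : log x - log (1 - x) - log v = 0 := hD.unique hd0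
      have hlogx : log x = log (v * (1 - x)) := by
        rw [Real.log_mul hv.ne' h1x.ne']; linarith
      have hxx : x = v * (1 - x) := by
        calc x = Real.exp (Real.log x) := (Real.exp_log hx0).symm
          _ = v * (1 - x) := by rw [hlogx, Real.exp_log (by positivity)]
      rw [eq_div_iff (by nlinarith : (1:ℝ) + v ≠ 0)]
      linear_combination hxx
  · -- Part 2
    set s := Real.sqrt ε with hs
    have hs0 : 0 < s := Real.sqrt_pos.mpr hε
    have hs1 : s < 1 := by
      rw [hs, show (1:ℝ) = Real.sqrt 1 by simp]
      exact Real.sqrt_lt_sqrt hε.le hε1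
    have hsq : s ^ 2 = ε := Real.sq_sqrt hε.le
    have hlogs : log s = log ε / 2 := Real.log_sqrt hε.le
    have hεv : (0:ℝ) < ε * v := mul_pos hε hv
    have h1εv : (0:ℝ) < 1 + ε * v := by linarith
    have h1v : (0:ℝ) < 1 + v := by linarith
    -- value of J at x₁ whenever x₁ ≤ 1/2
    have hJ1 : ε * v / (1 + ε * v) ≤ 1/2 → J (ε * v / (1 + ε * v)) = -log (1 + ε * v) := by
      intro h
      rw [hJ, if_pos h]
      have := stmt14_val_helper hεv
      rw [Real.log_mul hε.ne' hv.ne'] at this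
      linear_combination this
    have hJ2 : ¬ (v / (1 + v) ≤ 1/2) → J (v / (1 + v)) = -log (1 + v) - log ε / 2 := by
      intro h
      rw [hJ, if_neg h]
      have := stmt14_val_helper hv
      linear_combination this
    constructor
    · rintro ⟨h1, h2, h3⟩
      rw [hJ1 h1.le, hJ2 (not_le.mpr h2)] at h3
      have hkey : 1 + ε * v = (1 + v) * s := by
        have hl : log (1 + ε * v) = log ((1 + v) * s) := by
          rw [Real.log_mul h1v.ne' hs0.ne']
          linarith
        calc 1 + ε * v = Real.exp (log (1 + ε * v)) := (Real.exp_log h1εv).symm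
          _ = (1 + v) * s := by rw [hl, Real.exp_log (by positivity)]
      have h9 : (s - 1) * (s * v - 1) = 0 := by linear_combination hkey + v * hsq
      have hsv : s * v = 1 := by
        rcases mul_eq_zero.mp h9 with h | h
        · exfalso; linarith
        · linarith
      rw [eq_div_iff hs0.ne']
      linarith [hsv, mul_comm s v]
    · intro hveq
      have hεvs : ε * v = s := by
        rw [hveq, ← hsq]; field_simp
      have hx1 : ε * v / (1 + ε * v) = s / (1 + s) := by rw [hεvs]
      have hx2 : v / (1 + v) = 1 / (1 + s) := by
        rw [hveq]; rw [div_eq_div_iff (by positivity) (by positivity)]; field_simp; ring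
      have h1s : (0:ℝ) < 1 + s := by linarith
      refine ⟨?_, ?_, ?_⟩
      · rw [hx1, div_lt_iff₀ h1s]; linarith
      · rw [hx2, lt_div_iff₀ h1s]; linarith
      · have e1 : J (ε * v / (1 + ε * v)) = -log (1 + s) := by
          rw [hεvs] at hJ1 ⊢
          exact hJ1 (by rw [div_le_iff₀ h1s]; linarith)
        have e2 : J (v / (1 + v)) = -log (1 + s) := by
          have hhalf : ¬ (v / (1 + v) ≤ 1/2) := by
            rw [not_le, hx2, lt_div_iff₀ h1s]; linarith
          rw [hJ2 hhalf]
          have h1vs : (1:ℝ) + v = (1 + s) / s := by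
            rw [hveq]; field_simp; ring
          rw [h1vs, Real.log_div (by positivity) hs0.ne']
          linarith
        rw [e1, e2]
  · -- Part 3
    intro hveq
    set s := Real.sqrt ε with hs
    have hs0 : 0 < s := Real.sqrt_pos.mpr hε
    have hs1 : s < 1 := by
      rw [hs, show (1:ℝ) = Real.sqrt 1 by simp]
      exact Real.sqrt_lt_sqrt hε.le hε1
    have hsq : s ^ 2 = ε := Real.sq_sqrt hε.le
    have h1s : (0:ℝ) < 1 + s := by linarith
    have hlogs : log s = log ε / 2 := Real.log_sqrt hε.le
    have hlogv : log v = -log s := by rw [hveq, one_div, Real.log_inv]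
    have hεvs : ε * v = s := by rw [hveq, ← hsq]; field_simp
    have hx1 : ε * v / (1 + ε * v) = s / (1 + s) := by rw [hεvs]
    have hx2 : v / (1 + v) = 1 / (1 + s) := by
      rw [hveq]; rw [div_eq_div_iff (by positivity) (by positivity)]; field_simp; ring
    -- branch functions
    set g₁ : ℝ → ℝ := fun y => y * log y + (1 - y) * log (1 - y) - y * log s with hg₁
    set g₂ : ℝ → ℝ := fun y => y * log y + (1 - y) * log (1 - y) - y * log (1/s) with hg₂
    have hJa : ∀ x : ℝ, x ≤ 1/2 → J x = g₁ x := by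
      intro x hx
      rw [hJ, if_pos hx, hg₁]
      simp only [hlogv]
      linear_combination (2 * x) * hlogs
    have hJb : ∀ x : ℝ, 1/2 ≤ x → J x = g₂ x - log s := by
      intro x hx
      rw [hJ, hg₂]
      simp only [one_div, Real.log_inv]
      split_ifs with h
      · have hxe : x = 1/2 := by norm_num at h; linarith
        subst hxe
        simp only [hlogv]
        linear_combination hlogs
      · simp only [hlogv]
        linear_combination hlogs
    -- key points
    have hp1 : (0:ℝ) < s / (1 + s) := by positivity
    have hp1h : s / (1 + s) < 1/2 := by rw [div_lt_iff₀ h1s]; linarith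
    have hp2h : 1/2 < 1 / (1 + s) := by rw [lt_div_iff₀ h1s]; linarith
    have hp21 : 1 / (1 + s) < 1 := by rw [div_lt_one h1s]; linarith
    -- monotonicity pieces
    have A : StrictAntiOn g₁ (Set.Icc 0 (s / (1 + s))) := by
      apply stmt14_anti_helper hs0
      rintro x ⟨hx0, hxh⟩
      have hx1' : x < 1 := by nlinarith [hp1h]
      refine ⟨hx0, hx1', ?_⟩
      nlinarith [(lt_div_iff₀ h1s).mp hxh]
    have B : StrictMonoOn g₁ (Set.Icc (s / (1 + s)) (1/2)) := by
      apply stmt14_mono_helper hs0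
      rintro x ⟨hxl, hxh⟩
      refine ⟨lt_trans hp1 hxl, by linarith, ?_⟩
      nlinarith [(div_lt_iff₀ h1s).mp hxl]

    have hinv0 : (0:ℝ) < 1/s := by positivity
    have C : StrictAntiOn g₂ (Set.Icc (1/2) (1 / (1 + s))) := by
      apply stmt14_anti_helper hinv0
      rintro x ⟨hxl, hxh⟩
      refine ⟨by linarith, by linarith, ?_⟩
      rw [div_mul_eq_mul_div, lt_div_iff₀ hs0]
      have := (lt_div_iff₀ h1s).mp hxh
      nlinarith
    have D : StrictMonoOn g₂ (Set.Icc (1 / (1 + s)) 1) := by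
      apply stmt14_mono_helper hinv0
      rintro x ⟨hxl, hxh⟩
      refine ⟨by linarith, hxh, ?_⟩
      rw [div_mul_eq_mul_div, div_lt_iff₀ hs0]
      have := (div_lt_iff₀ h1s).mp hxl
      nlinarith
    -- values at the two critical points
    have hg1v : g₁ (s / (1 + s)) = -log (1 + s) := stmt14_val_helper hs0
    have hpt : (1/s) / (1 + 1/s) = 1 / (1 + s) := by
      rw [div_eq_div_iff (by positivity) (by positivity)]; field_simp; ring
    have hg2v : g₂ (1 / (1 + s)) = -log (1 + 1/s) := by
      have := stmt14_val_helper hinv0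
      rw [hpt] at this
      exact this
    have hJv1 : J (s / (1 + s)) = -log (1 + s) := by rw [hJa _ hp1h.le]; exact hg1v
    have hJv2 : J (1 / (1 + s)) = -log (1 + s) := by
      rw [hJb _ hp2h.le, hg2v]
      have h2 : (1:ℝ) + 1/s = (1 + s)/s := by field_simp; ring
      rw [h2, Real.log_div h1s.ne' hs0.ne']
      ring
    have hg2p : g₂ (1 / (1 + s)) - log s = -log (1 + s) := by
      rw [← hJb _ hp2h.le]; exact hJv2
    have key : ∀ x ∈ Set.Icc (0:ℝ) 1, J (s/(1+s)) ≤ J x ∧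
        (J x = J (s/(1+s)) → x = s/(1+s) ∨ x = 1/(1+s)) := by
      rintro x ⟨hx0, hx1'⟩
      rcases le_total x (1/2) with hhalf | hhalf
      · have hJx : J x = g₁ x := hJa x hhalf
        rcases lt_trichotomy x (s/(1+s)) with h | h | h
        · have hlt : g₁ (s/(1+s)) < g₁ x := A ⟨hx0, h.le⟩ ⟨hp1.le, le_rfl⟩ h
          refine ⟨?_, fun he => ?_⟩
          · rw [hJx, hJv1, ← hg1v]; exact hlt.le
          · exfalso; rw [hJx, hJv1, ← hg1v] at he; linarith
        · exact ⟨by rw [h], fun _ => Or.inl h⟩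
        · have hlt : g₁ (s/(1+s)) < g₁ x := B ⟨le_rfl, hp1h.le⟩ ⟨h.le, hhalf⟩ h
          refine ⟨?_, fun he => ?_⟩
          · rw [hJx, hJv1, ← hg1v]; exact hlt.le
          · exfalso; rw [hJx, hJv1, ← hg1v] at he; linarith
      · have hJx : J x = g₂ x - log s := hJb x hhalf
        rcases lt_trichotomy x (1/(1+s)) with h | h | h
        · have hlt : g₂ (1/(1+s)) < g₂ x := C ⟨hhalf, h.le⟩ ⟨hp2h.le, le_rfl⟩ h
          refine ⟨?_, fun he => ?_⟩
          · rw [hJx, hJv1, ← hg2p]; linarith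
          · exfalso; rw [hJx, hJv1, ← hg2p] at he; linarith
        · exact ⟨by rw [h, hJv2, hJv1], fun _ => Or.inr h⟩
        · have hlt : g₂ (1/(1+s)) < g₂ x := D ⟨le_rfl, hp21.le⟩ ⟨h.le, hx1'⟩ h
          refine ⟨?_, fun he => ?_⟩
          · rw [hJx, hJv1, ← hg2p]; linarith
          · exfalso; rw [hJx, hJv1, ← hg2p] at he; linarith
    constructor
    · intro x hx
      rw [hx1]
      exact (key x hx).1
    · intro x hx he
      rw [hx1] at he
      rw [hx1, hx2]
      exact (key x hx).2 he
end

section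
/- Let b^{(N)}, d^{(N)} be positive birth and death rate functions on {0,…,N} (with b^{(N)}(1)=d^{(N)}(0)=0 interpreted appropriately) and let π̄_N be the steady state of the birth-and-death chain: π̄_N(k) = π̄_N(0) Π_{j=0}^{k−1} b^{(N)}(j/N)/d^{(N)}((j+1)/N). If for all k = 0,…,N−2 the inequality ((k+2)/(N−k−1)) d^{(N)}(k+1) b^{(N)}(k+1) > ((k+1)/(N−k)) d^{(N)}(k+2) b^{(N)}(k) holds, then the associated exchangeable measure π on {0,1}^N defined by π(n) = π̄_N(|n|)/C(N,|n|) is 1-monotonic: for every site i, every configuration ξ, and J = {i}, the conditional probability π(n_i = 1 | n_j = ξ_j for j ≠ i) is non-decreasing in ξ (coordinatewise order). -/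
open Finset

lemma frac_mono (a b c e : ℝ) (ha : 0 < a) (hb : 0 < b) (hc : 0 < c) (he : 0 < e)
    (h : a * e ≤ c * b) : a / (a + b) ≤ c / (c + e) := by
  rw [div_le_div_iff₀ (by linarith) (by linarith)]
  nlinarith

lemma chain (M : ℕ) (A B : ℕ → ℝ) (hA : ∀ k ≤ M, 0 < A k) (hB : ∀ k ≤ M, 0 < B k)
    (hstep : ∀ k, k + 1 ≤ M → A k * B (k + 1) ≤ A (k + 1) * B k) :
    ∀ a c, a ≤ c → c ≤ M → A a / (A a + B a) ≤ A c / (A c + B c) := by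
  intro a c hac hcM
  induction c with
  | zero => interval_cases a; rfl
  | succ n ih =>
    rcases Nat.lt_or_ge a (n+1) with h | h
    · have h1 : A a / (A a + B a) ≤ A n / (A n + B n) :=
        ih (Nat.lt_succ_iff.mp h) (by omega)
      refine h1.trans ?_
      exact frac_mono _ _ _ _ (hA n (by omega)) (hB n (by omega))
        (hA (n+1) hcM) (hB (n+1) hcM) (hstep n hcM)
    · have : a = n + 1 := le_antisymm hac h
      subst this; rfl

lemma occ_update_false {N : ℕ} (ξ : Fin N → Bool) (i : Fin N) :
    occ (Function.update ξ i false) = (univ.filter fun j => j ≠ i ∧ ξ j = true).card := by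
  unfold occ; congr 1; ext j
  by_cases h : j = i <;> simp [Function.update_apply, h]

lemma occ_update_true {N : ℕ} (ξ : Fin N → Bool) (i : Fin N) :
    occ (Function.update ξ i true) = (univ.filter fun j => j ≠ i ∧ ξ j = true).card + 1 := by
  unfold occ
  have : (univ.filter fun j => Function.update ξ i true j = true)
      = insert i (univ.filter fun j => j ≠ i ∧ ξ j = true) := by
    ext j
    by_cases h : j = i <;> simp [Function.update_apply, h]
  rw [this, card_insert_of_notMem (by simp)]

/-- If the birth and death rates of a density dependent birth-and-death chain
satisfy the stated inequality, then the exchangeable measure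
`π(n) = π̄_N(|n|)/C(N,|n|)` built from its steady state `π̄_N` is 1-monotonic. -/
theorem stmt18 (N : ℕ) (hN : 2 ≤ N)
    (b d : ℕ → ℝ)
    (hb : ∀ j < N, 0 < b j)
    (hd : ∀ j, 1 ≤ j → j ≤ N → 0 < d j)
    (w : ℕ → ℝ) (hw0 : 0 < w 0)
    (hw : ∀ k ≤ N, w k = w 0 * ∏ j ∈ Finset.range k, b j / d (j + 1))
    (hineq : ∀ k ≤ N - 2,
      (((k : ℝ) + 2) / ((N : ℝ) - k - 1)) * d (k + 1) * b (k + 1) >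
        (((k : ℝ) + 1) / ((N : ℝ) - k)) * d (k + 2) * b k)
    (π : (Fin N → Bool) → ℝ)
    (hπ : ∀ n, π n = w (occ n) / (N.choose (occ n) : ℝ)) :
    ∀ i : Fin N, ∀ ξ η : Fin N → Bool,
      (∀ j, j ≠ i → ξ j ≤ η j) →
      π (Function.update ξ i true) /
          (π (Function.update ξ i true) + π (Function.update ξ i false)) ≤
        π (Function.update η i true) /
          (π (Function.update η i true) + π (Function.update η i false)) := by
  intro i ξ η hξη
  -- positivity of w
  have hwpos : ∀ k ≤ N, 0 < w k := by
    intro k hk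
    rw [hw k hk]
    refine mul_pos hw0 (Finset.prod_pos ?_)
    intro j hj
    simp only [mem_range] at hj
    exact div_pos (hb j (by omega)) (hd (j+1) (by omega) (by omega))
  have hwsucc : ∀ k, k + 1 ≤ N → w (k+1) = w k * (b k / d (k+1)) := by
    intro k hk
    rw [hw (k+1) hk, hw k (by omega), Finset.prod_range_succ, mul_assoc]
  set A : ℕ → ℝ := fun k => w (k+1) / (N.choose (k+1) : ℝ) with hA
  set B : ℕ → ℝ := fun k => w k / (N.choose k : ℝ) with hB
  have hchoosepos : ∀ k ≤ N, (0:ℝ) < (N.choose k : ℝ) := by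
    intro k hk; exact_mod_cast Nat.choose_pos hk
  have hApos : ∀ k ≤ N - 1, 0 < A k := fun k hk =>
    div_pos (hwpos (k+1) (by omega)) (hchoosepos (k+1) (by omega))
  have hBpos : ∀ k ≤ N - 1, 0 < B k := fun k hk =>
    div_pos (hwpos k (by omega)) (hchoosepos k (by omega))
  -- step inequality
  have hstep : ∀ k, k + 1 ≤ N - 1 → A k * B (k+1) ≤ A (k+1) * B k := by
    intro k hk
    have hk2 : k + 2 ≤ N := by omega
    have key := hineq k (by omega)
    have c0 : (0:ℝ) < N.choose k := hchoosepos k (by omega)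
    have c1 : (0:ℝ) < N.choose (k+1) := hchoosepos (k+1) (by omega)
    have c2 : (0:ℝ) < N.choose (k+2) := hchoosepos (k+2) (by omega)
    have hbk : 0 < b k := hb k (by omega)
    have hbk1 : 0 < b (k+1) := hb (k+1) (by omega)
    have hdk1 : 0 < d (k+1) := hd (k+1) (by omega) (by omega)
    have hdk2 : 0 < d (k+2) := hd (k+2) (by omega) (by omega)
    have hwk : 0 < w k := hwpos k (by omega)
    have hNk0 : (0:ℝ) < (N:ℝ) - k := by
      have : (k:ℝ) < N := by exact_mod_cast (by omega : k < N)
      linarith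
    have hNk1 : (0:ℝ) < (N:ℝ) - k - 1 := by
      have : ((k:ℝ) + 1) < N := by exact_mod_cast (by omega : k + 1 < N)
      linarith
    -- choose relations in ℝ
    have r1 : (N.choose (k+1) : ℝ) * ((k:ℝ)+1) = (N.choose k : ℝ) * ((N:ℝ) - k) := by
      have h := Nat.choose_succ_right_eq N k
      have := congrArg (fun x : ℕ => (x:ℝ)) h
      push_cast [Nat.cast_sub (by omega : k ≤ N)] at this
      linarith
    have r2 : (N.choose (k+2) : ℝ) * ((k:ℝ)+2) = (N.choose (k+1) : ℝ) * ((N:ℝ) - k - 1) := by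
      have h := Nat.choose_succ_right_eq N (k+1)
      have := congrArg (fun x : ℕ => (x:ℝ)) h
      push_cast [Nat.cast_sub (by omega : k + 1 ≤ N)] at this
      linarith
    -- multiplied-out key inequality
    have key2 : ((k:ℝ)+1) * ((N:ℝ) - k - 1) * d (k+2) * b k ≤
        ((k:ℝ)+2) * ((N:ℝ) - k) * d (k+1) * b (k+1) := by
      rw [gt_iff_lt, div_mul_eq_mul_div, div_mul_eq_mul_div, div_mul_eq_mul_div,
        div_mul_eq_mul_div, div_lt_div_iff₀ hNk0 hNk1] at key
      nlinarith [key]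
    -- inequality on choose coefficients
    have G : b k * d (k+2) * ((N.choose (k+2) : ℝ) * (N.choose k : ℝ)) ≤
        b (k+1) * d (k+1) * ((N.choose (k+1) : ℝ) * (N.choose (k+1) : ℝ)) := by
      have hmul : (0:ℝ) < ((k:ℝ)+2) * ((N:ℝ) - k) := by positivity
      rw [← mul_le_mul_iff_of_pos_right hmul]
      have e : b k * d (k+2) * ((N.choose (k+2) : ℝ) * (N.choose k : ℝ)) *
          (((k:ℝ)+2) * ((N:ℝ) - k)) =
          b k * d (k+2) * (((N.choose (k+2) : ℝ) * ((k:ℝ)+2)) *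
            ((N.choose k : ℝ) * ((N:ℝ) - k))) := by ring
      rw [e, r2, ← r1]
      nlinarith [mul_le_mul_of_nonneg_right key2
        (mul_nonneg c1.le c1.le)]
    -- now the main step
    have hw1 : w (k+1) = w k * (b k / d (k+1)) := hwsucc k (by omega)
    have hw2 : w (k+2) = w (k+1) * (b (k+1) / d (k+2)) := hwsucc (k+1) hk2
    simp only [hA, hB, show k+1+1 = k+2 from rfl]
    rw [div_mul_div_comm, div_mul_div_comm, div_le_div_iff₀ (by positivity) (by positivity)]
    rw [hw2, hw1]
    have hmono := mul_le_mul_of_nonneg_left G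
      (by positivity : (0:ℝ) ≤ w k * w k * b k)
    rw [← mul_le_mul_iff_of_pos_right (show (0:ℝ) < d (k+1) * d (k+1) * d (k+2) by positivity)]
    have hd1 : d (k+1) ≠ 0 := ne_of_gt hdk1
    have hd2 : d (k+2) ≠ 0 := ne_of_gt hdk2
    convert hmono using 1
    · field_simp
    · field_simp
  -- occupancy counts
  set mξ := (univ.filter fun j => j ≠ i ∧ ξ j = true).card with hmξ
  set mη := (univ.filter fun j => j ≠ i ∧ η j = true).card with hmη
  have hsub : (univ.filter fun j => j ≠ i ∧ ξ j = true) ⊆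
      (univ.filter fun j => j ≠ i ∧ η j = true) := by
    intro j hj
    simp only [mem_filter, mem_univ, true_and] at hj ⊢
    refine ⟨hj.1, ?_⟩
    have h2 := hξη j hj.1
    rw [hj.2] at h2
    cases hc : η j
    · rw [hc] at h2; exact absurd h2 (by decide)
    · rfl
  have hmle : mξ ≤ mη := card_le_card hsub
  have hmηle : mη ≤ N - 1 := by
    have : (univ.filter fun j => j ≠ i ∧ η j = true) ⊆ univ.erase i := by
      intro j hj
      simp only [mem_filter, mem_univ, true_and] at hj
      exact mem_erase.mpr ⟨hj.1, mem_univ j⟩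
    have h2 := card_le_card this
    rw [card_erase_of_mem (mem_univ i), card_univ, Fintype.card_fin] at h2
    omega
  have e1 : π (Function.update ξ i true) = A mξ := by
    rw [hπ, occ_update_true]
  have e2 : π (Function.update ξ i false) = B mξ := by
    rw [hπ, occ_update_false]
  have e3 : π (Function.update η i true) = A mη := by
    rw [hπ, occ_update_true]
  have e4 : π (Function.update η i false) = B mη := by
    rw [hπ, occ_update_false]
  rw [e1, e2, e3, e4]
  exact chain (N-1) A B hApos hBpos hstep mξ mη hmle hmηle
end
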